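/- For a binomial random variable S ~ Binomial(n, q) with 0 < q < 1 and integer δ with q·n < δ ≤ n, P(S ≥ δ) ≥ P(S = δ) ≥ (1/√(2n)) · exp(-n · D(δ/n ‖ q)), where D(a‖b) is the binary KL divergence. -/

import Mathlib

/-- Binary KL divergence `D(a‖b) = a·log(a/b) + (1-a)·log((1-a)/(1-b))`. -/
noncomputable def klBern (a b : ℝ) : ℝ :=
  a * Real.log (a / b) + (1 - a) * Real.log ((1 - a) / (1 - b))

/-!
With `n = k + m`, the identity `exp (-n·D(k/n ‖ q)) · k^k m^m = n^n q^k (1-q)^m` turns the bound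
into the estimate `n^n ≤ √(2n) · C(n,k) · k^k m^m` on binomial coefficients. Multiplying by
`k! m!`, it follows from Stirling's lower bound `n! ≥ √(2πn) (n/e)^n` and the upper bound
`j! ≤ (e²/4) √(2j) (j/e)^j` for `j ≥ 2` (the Stirling sequence decreases from its value `e²/4`
at 2), because `√(km) ≤ n/2` and `(e²/4)² ≤ 2√π`. If `k` or `m` is 1, that upper bound fails for
`1! = 1`, and `(1 + 1/m)^m ≤ e ≤ √(2n)` is used instead.
-/

open Real
open scoped Nat

namespace Stirling

theorem stirlingSeq_two : stirlingSeq 2 = exp 1 ^ 2 / 4 := by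
  have h : √(2 * 2 : ℝ) = 2 := by
    rw [show (2 * 2 : ℝ) = 2 ^ 2 by norm_num, sqrt_sq zero_le_two]
  rw [stirlingSeq, Nat.cast_ofNat, h, Nat.factorial_two]
  field_simp
  norm_num

theorem stirlingSeq_le_of_two_le {m : ℕ} (hm : 2 ≤ m) : stirlingSeq m ≤ exp 1 ^ 2 / 4 := by
  obtain ⟨j, rfl⟩ := Nat.exists_eq_add_of_le' hm
  rw [← stirlingSeq_two]
  exact stirlingSeq'_antitone (show 1 ≤ j + 1 by omega)

theorem factorial_le_of_two_le {m : ℕ} (hm : 2 ≤ m) :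
    (m ! : ℝ) ≤ exp 1 ^ 2 / 4 * (√(2 * m) * (m / exp 1) ^ m) := by
  rw [← div_le_iff₀ (by positivity)]
  exact stirlingSeq_le_of_two_le hm

end Stirling

theorem exp_one_pow_four_le : exp 1 ^ 4 ≤ 32 * √π := by
  have h8 : exp 1 ^ 8 < 2.7182818286 ^ 8 :=
    pow_lt_pow_left₀ exp_one_lt_d9 (exp_pos 1).le (by norm_num)
  have hs : exp 1 ^ 4 / 32 ≤ √π := by
    rw [le_sqrt (by positivity) pi_pos.le]
    nlinarith [pi_gt_d6]
  linarith

theorem add_pow_add_le_sqrt_mul_choose_of_two_le {k m : ℕ} (hk : 2 ≤ k) (hm : 2 ≤ m) :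
    ((k + m : ℕ) : ℝ) ^ (k + m) ≤
      √(2 * (k + m : ℕ)) * (k + m).choose k * (k : ℝ) ^ k * (m : ℝ) ^ m := by
  set n := k + m with hn
  have hchoose : ((n.choose k : ℕ) : ℝ) * k ! * m ! = n ! := by
    rw [hn, Nat.choose_symm_add, ← Nat.add_choose_mul_factorial_mul_factorial k m]
    push_cast; ring
  have hsqrt : √(2 * k) * √(2 * m) ≤ n := by
    rw [← sqrt_mul (by positivity), sqrt_le_left (by positivity), hn]
    push_cast
    nlinarith [sq_nonneg ((k : ℝ) - m)]
  have hcross : √(2 * n) * √(2 * π * n) = 2 * √π * n := by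
    rw [← sqrt_mul (by positivity), show 2 * n * (2 * π * n) = π * (2 * n) ^ 2 by ring,
      sqrt_mul pi_pos.le, sqrt_sq (by positivity)]
    ring
  have hexp : exp 1 ^ n = exp 1 ^ k * exp 1 ^ m := by rw [hn, pow_add]
  have hfactorials : (k ! : ℝ) * m ! ≤ 2 * √π * n * ((k : ℝ) ^ k * m ^ m / exp 1 ^ n) := calc
    (k ! : ℝ) * m ! ≤ (exp 1 ^ 2 / 4 * (√(2 * k) * (k / exp 1) ^ k)) *
        (exp 1 ^ 2 / 4 * (√(2 * m) * (m / exp 1) ^ m)) := by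
      gcongr
      exacts [Stirling.factorial_le_of_two_le hk, Stirling.factorial_le_of_two_le hm]
    _ = exp 1 ^ 4 / 16 * (√(2 * k) * √(2 * m)) * ((k : ℝ) ^ k * m ^ m / exp 1 ^ n) := by
      rw [hexp, div_pow, div_pow]; ring
    _ ≤ 2 * √π * n * ((k : ℝ) ^ k * m ^ m / exp 1 ^ n) := by
      gcongr
      linarith [exp_one_pow_four_le]
  have key : (n : ℝ) ^ n * (k ! * m !) ≤
      √(2 * n) * n.choose k * k ^ k * m ^ m * (k ! * m !) := calc
    (n : ℝ) ^ n * (k ! * m !) ≤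
        (n : ℝ) ^ n * (2 * √π * n * ((k : ℝ) ^ k * m ^ m / exp 1 ^ n)) := by
      gcongr
    _ = √(2 * n) * (√(2 * π * n) * (n / exp 1) ^ n) * k ^ k * m ^ m := by
      rw [div_pow, ← hcross]; ring
    _ ≤ √(2 * n) * n ! * k ^ k * m ^ m := by
      gcongr
      exact Stirling.le_factorial_stirling n
    _ = √(2 * n) * n.choose k * k ^ k * m ^ m * (k ! * m !) := by
      rw [← hchoose]; ring
  exact le_of_mul_le_mul_right key (by positivity)

theorem succ_pow_succ_le_sqrt_mul_mul_pow (m : ℕ) :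
    ((m + 1 : ℕ) : ℝ) ^ (m + 1) ≤ √(2 * (m + 1 : ℕ)) * (m + 1 : ℕ) * (m : ℝ) ^ m := by
  rcases lt_or_ge m 3 with hm | hm
  · interval_cases m
    · norm_num [one_le_sqrt]
    · norm_num [show √4 = 2 by rw [show (4 : ℝ) = 2 ^ 2 by norm_num, sqrt_sq zero_le_two]]
    · have : (9 / 4 : ℝ) ≤ √6 := by rw [Real.le_sqrt] <;> norm_num
      norm_num
      linarith
  have hsucc : ((m + 1 : ℕ) : ℝ) = m * (1 + (m : ℝ)⁻¹) := by push_cast; field_simp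
  have he : exp 1 ≤ √(2 * (m + 1 : ℕ)) := by
    rw [Real.le_sqrt (exp_pos 1).le (by positivity)]
    have : (3 : ℝ) ≤ m := by exact_mod_cast hm
    push_cast
    nlinarith [exp_one_lt_d9, exp_pos 1]
  calc ((m + 1 : ℕ) : ℝ) ^ (m + 1) = (m + 1 : ℕ) * (m : ℝ) ^ m * (1 + (m : ℝ)⁻¹) ^ m := by
        rw [pow_succ', mul_assoc, ← mul_pow, ← hsucc]
    _ ≤ (m + 1 : ℕ) * (m : ℝ) ^ m * exp 1 := by gcongr; exact one_add_inv_pow_le_exp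
    _ ≤ (m + 1 : ℕ) * (m : ℝ) ^ m * √(2 * (m + 1 : ℕ)) := by gcongr
    _ = √(2 * (m + 1 : ℕ)) * (m + 1 : ℕ) * (m : ℝ) ^ m := by ring

theorem add_pow_add_le_sqrt_mul_choose (k m : ℕ) (h : k + m ≠ 0) :
    ((k + m : ℕ) : ℝ) ^ (k + m) ≤
      √(2 * (k + m : ℕ)) * (k + m).choose k * (k : ℝ) ^ k * (m : ℝ) ^ m := by
  wlog hkm : k ≤ m generalizing k m
  · have := this m k (by omega) (by omega)
    rw [add_comm m, ← Nat.choose_symm_add] at this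
    exact this.trans_eq (by ring)
  rcases Nat.lt_or_ge k 2 with hk | hk
  · interval_cases k
    · have : (1 : ℝ) ≤ √(2 * (0 + m : ℕ)) := by
        rw [one_le_sqrt]; push_cast; norm_cast; omega
      simpa using le_mul_of_one_le_left (by positivity) this
    · simpa [add_comm 1 m, Nat.choose_symm_add] using succ_pow_succ_le_sqrt_mul_mul_pow m
  · exact add_pow_add_le_sqrt_mul_choose_of_two_le hk (hk.trans hkm)

theorem exp_neg_mul_log_div_mul_pow (k : ℕ) {c : ℝ} (hc : 0 < c) :
    exp (-(k * log (k / c))) * (k : ℝ) ^ k = c ^ k := by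
  rcases Nat.eq_zero_or_pos k with rfl | hk
  · simp
  have hk' : (0 : ℝ) < k := by exact_mod_cast hk
  rw [← mul_neg, exp_nat_mul, ← log_inv, exp_log (by positivity), ← mul_pow, inv_div,
    div_mul_cancel₀ _ hk'.ne']

theorem exp_neg_mul_klBern_mul_pow_mul_pow (k m : ℕ) (h : k + m ≠ 0) {q : ℝ} (hq0 : 0 < q)
    (hq1 : q < 1) :
    exp (-((k + m : ℕ) : ℝ) * klBern ((k : ℝ) / (k + m : ℕ)) q) * (k : ℝ) ^ k * (m : ℝ) ^ m =
      ((k + m : ℕ) : ℝ) ^ (k + m) * q ^ k * (1 - q) ^ m := by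
  set n : ℝ := ((k + m : ℕ) : ℝ) with hn
  have hn0 : 0 < n := by rw [hn]; exact_mod_cast Nat.pos_of_ne_zero h
  have hsplit : -n * klBern (k / n) q =
      -(k * log (k / (n * q))) + -(m * log (m / (n * (1 - q)))) := by
    have hm : 1 - (k : ℝ) / n = m / n := by
      rw [eq_div_iff hn0.ne', sub_mul, div_mul_cancel₀ _ hn0.ne', hn]; push_cast; ring
    rw [klBern, hm, div_div, div_div]
    field_simp
    ring
  have hq1' : 0 < 1 - q := sub_pos.2 hq1
  rw [hsplit, exp_add]
  calc _ = (exp (-(k * log (k / (n * q)))) * (k : ℝ) ^ k) *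
        (exp (-(m * log (m / (n * (1 - q))))) * (m : ℝ) ^ m) := by ring
    _ = (n * q) ^ k * (n * (1 - q)) ^ m := by
      rw [exp_neg_mul_log_div_mul_pow k (by positivity),
        exp_neg_mul_log_div_mul_pow m (by positivity)]
    _ = n ^ (k + m) * q ^ k * (1 - q) ^ m := by rw [mul_pow, mul_pow, pow_add]; ring

theorem exp_neg_mul_klBern_le_sqrt_mul_choose (k m : ℕ) (h : k + m ≠ 0) {q : ℝ} (hq0 : 0 < q)
    (hq1 : q < 1) :
    exp (-((k + m : ℕ) : ℝ) * klBern ((k : ℝ) / (k + m : ℕ)) q) ≤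
      √(2 * (k + m : ℕ)) * ((k + m).choose k * q ^ k * (1 - q) ^ m) := by
  have hq1' : 0 < 1 - q := sub_pos.2 hq1
  have hpow : (0 : ℝ) < (k : ℝ) ^ k * (m : ℝ) ^ m := by
    have hk : (0 : ℝ) < (k : ℝ) ^ k := by exact_mod_cast Nat.pow_self_pos
    have hm : (0 : ℝ) < (m : ℝ) ^ m := by exact_mod_cast Nat.pow_self_pos
    positivity
  refine le_of_mul_le_mul_right ?_ hpow
  calc _ = ((k + m : ℕ) : ℝ) ^ (k + m) * q ^ k * (1 - q) ^ m := by
        rw [← exp_neg_mul_klBern_mul_pow_mul_pow k m h hq0 hq1]; ring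
    _ ≤ (√(2 * (k + m : ℕ)) * (k + m).choose k * (k : ℝ) ^ k * (m : ℝ) ^ m) *
          q ^ k * (1 - q) ^ m := by
        gcongr; exact add_pow_add_le_sqrt_mul_choose k m h
    _ = _ := by ring

theorem stmt10_general (n : ℕ) (hn : 1 ≤ n) (q : ℝ) (hq0 : 0 < q) (hq1 : q < 1)
    (δ : ℕ) (hδn : δ ≤ n) :
    (1 / Real.sqrt (2 * n)) * Real.exp (-(n : ℝ) * klBern ((δ : ℝ) / n) q) ≤
      (n.choose δ : ℝ) * q ^ δ * (1 - q) ^ (n - δ) ∧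
    (n.choose δ : ℝ) * q ^ δ * (1 - q) ^ (n - δ) ≤
      ∑ i ∈ Finset.Icc δ n, (n.choose i : ℝ) * q ^ i * (1 - q) ^ (n - i) := by
  have hq1' : 0 < 1 - q := sub_pos.2 hq1
  refine ⟨?_, Finset.single_le_sum (f := fun i => (n.choose i : ℝ) * q ^ i * (1 - q) ^ (n - i))
    (fun i _ => by positivity) (Finset.mem_Icc.2 ⟨le_rfl, hδn⟩)⟩
  obtain ⟨m, rfl⟩ := Nat.exists_eq_add_of_le hδn
  rw [Nat.add_sub_cancel_left, one_div_mul_eq_div, div_le_iff₀' (sqrt_pos.2 (by positivity))]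
  exact exp_neg_mul_klBern_le_sqrt_mul_choose δ m (by omega) hq0 hq1

/-- Anti-concentration (reverse Chernoff) for `S ~ Binomial(n, q)` with
`q·n < δ ≤ n`: `P(S ≥ δ) ≥ P(S = δ) ≥ (1/√(2n))·exp(-n·D(δ/n ‖ q))`. -/
theorem stmt10 (n : ℕ) (hn : 1 ≤ n) (q : ℝ) (hq0 : 0 < q) (hq1 : q < 1)
    (δ : ℕ) (hδ : q * n < δ) (hδn : δ ≤ n) :
    (1 / Real.sqrt (2 * n)) * Real.exp (-(n : ℝ) * klBern ((δ : ℝ) / n) q) ≤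
      (n.choose δ : ℝ) * q ^ δ * (1 - q) ^ (n - δ) ∧
    (n.choose δ : ℝ) * q ^ δ * (1 - q) ^ (n - δ) ≤
      ∑ i ∈ Finset.Icc δ n, (n.choose i : ℝ) * q ^ i * (1 - q) ^ (n - i) :=
  stmt10_general n hn q hq0 hq1 δ hδn
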